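/- For every closed negation-free μL'f formula φ' and every product family P ⊆ 𝒫: if P ⊨'_F φ' then p ⊨_F fm(φ') for every product p ∈ P. -/

import Mathlib

namespace SPLmu

/-- A feature transition system: `theta s a t` is the feature expression
(identified with the set of products satisfying it) guarding the transition. -/
structure FTS (S A P : Type) where
  theta : S → A → S → Set P
  init : S

/-- A labeled transition system. -/
structure LTS (S A : Type) where
  trans : S → A → S → Prop
  init : S

/-- Projection of an FTS onto a product. -/
def FTS.proj {S A P : Type} (F : FTS S A P) (p : P) : LTS S A :=
  ⟨fun s a t => p ∈ F.theta s a t, F.init⟩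

/-- Knaster–Tarski least (pre)fixpoint. -/
def slfp {α : Type} (f : Set α → Set α) : Set α := ⋂₀ {V | f V ⊆ V}

/-- Knaster–Tarski greatest (post)fixpoint. -/
def sgfp {α : Type} (f : Set α → Set α) : Set α := ⋃₀ {V | V ⊆ f V}

/-- The modal mu-calculus μL. -/
inductive MuL (A X : Type) : Type where
  | bot | top
  | neg : MuL A X → MuL A X
  | or  : MuL A X → MuL A X → MuL A X
  | and : MuL A X → MuL A X → MuL A X
  | dia : A → MuL A X → MuL A X
  | box : A → MuL A X → MuL A X
  | var : X → MuL A X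
  | mu  : X → MuL A X → MuL A X
  | nu  : X → MuL A X → MuL A X

/-- The feature mu-calculus μLf (also used as the syntax of μL'f, whose
modality ⟪a|χ⟫ corresponds to `dia`; the translation `fm` is then the identity). -/
inductive MuLf (A X P : Type) : Type where
  | bot | top
  | neg : MuLf A X P → MuLf A X P
  | or  : MuLf A X P → MuLf A X P → MuLf A X P
  | and : MuLf A X P → MuLf A X P → MuLf A X P
  | dia : A → Set P → MuLf A X P → MuLf A X P
  | box : A → Set P → MuLf A X P → MuLf A X P
  | var : X → MuLf A X P
  | mu  : X → MuLf A X P → MuLf A X P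
  | nu  : X → MuLf A X P → MuLf A X P

variable {S A X P : Type}

/-- Standard μL semantics over an LTS. -/
def MuL.sem [DecidableEq X] (L : LTS S A) : MuL A X → (X → Set S) → Set S
  | .bot, _ => ∅
  | .top, _ => Set.univ
  | .neg φ, ε => (MuL.sem L φ ε)ᶜ
  | .or φ ψ, ε => MuL.sem L φ ε ∪ MuL.sem L ψ ε
  | .and φ ψ, ε => MuL.sem L φ ε ∩ MuL.sem L ψ ε
  | .dia a φ, ε => {s | ∃ t, L.trans s a t ∧ t ∈ MuL.sem L φ ε}
  | .box a φ, ε => {s | ∀ t, L.trans s a t → t ∈ MuL.sem L φ ε}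
  | .var x, ε => ε x
  | .mu x φ, ε => slfp (fun V => MuL.sem L φ (Function.update ε x V))
  | .nu x φ, ε => sgfp (fun V => MuL.sem L φ (Function.update ε x V))

/-- Product-based μLf semantics over an FTS (sets of state-product pairs). -/
def MuLf.sem [DecidableEq X] (F : FTS S A P) : MuLf A X P → (X → Set (S × P)) → Set (S × P)
  | .bot, _ => ∅
  | .top, _ => Set.univ
  | .neg φ, η => (MuLf.sem F φ η)ᶜ
  | .or φ ψ, η => MuLf.sem F φ η ∪ MuLf.sem F ψ η
  | .and φ ψ, η => MuLf.sem F φ η ∩ MuLf.sem F ψ η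
  | .dia a χ φ, η =>
      {sp | sp.2 ∈ χ ∧ ∃ t, sp.2 ∈ F.theta sp.1 a t ∧ (t, sp.2) ∈ MuLf.sem F φ η}
  | .box a χ φ, η =>
      {sp | sp.2 ∈ χ → ∀ t, sp.2 ∈ F.theta sp.1 a t → (t, sp.2) ∈ MuLf.sem F φ η}
  | .var x, η => η x
  | .mu x φ, η => slfp (fun V => MuLf.sem F φ (Function.update η x V))
  | .nu x φ, η => sgfp (fun V => MuLf.sem F φ (Function.update η x V))

/-- Family-based μL'f semantics over an FTS (sets of state-family pairs);
here `dia` plays the role of the family modality ⟪a|χ⟫. -/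
def MuLf.fsem [DecidableEq X] (F : FTS S A P) :
    MuLf A X P → (X → Set (S × Set P)) → Set (S × Set P)
  | .bot, _ => ∅
  | .top, _ => Set.univ
  | .neg φ, ζ => (MuLf.fsem F φ ζ)ᶜ
  | .or φ ψ, ζ => MuLf.fsem F φ ζ ∪ MuLf.fsem F ψ ζ
  | .and φ ψ, ζ => MuLf.fsem F φ ζ ∩ MuLf.fsem F ψ ζ
  | .dia a χ φ, ζ =>
      {sP | sP.2 ⊆ χ ∧ ∃ t, sP.2 ⊆ F.theta sP.1 a t ∧
        (t, sP.2 ∩ χ ∩ F.theta sP.1 a t) ∈ MuLf.fsem F φ ζ}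
  | .box a χ φ, ζ =>
      {sP | (sP.2 ∩ χ).Nonempty → ∀ t, (sP.2 ∩ χ ∩ F.theta sP.1 a t).Nonempty →
        (t, sP.2 ∩ χ ∩ F.theta sP.1 a t) ∈ MuLf.fsem F φ ζ}
  | .var x, ζ => ζ x
  | .mu x φ, ζ => slfp (fun W => MuLf.fsem F φ (Function.update ζ x W))
  | .nu x φ, ζ => sgfp (fun W => MuLf.fsem F φ (Function.update ζ x W))

-- The translation sm : μLf × 𝒫 → μL.
open Classical in
noncomputable def MuLf.sm : MuLf A X P → P → MuL A X
  | .bot, _ => .bot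
  | .top, _ => .top
  | .neg φ, p => .neg (MuLf.sm φ p)
  | .or φ ψ, p => .or (MuLf.sm φ p) (MuLf.sm ψ p)
  | .and φ ψ, p => .and (MuLf.sm φ p) (MuLf.sm ψ p)
  | .dia a χ φ, p => if p ∈ χ then .dia a (MuLf.sm φ p) else .bot
  | .box a χ φ, p => if p ∈ χ then .box a (MuLf.sm φ p) else .top
  | .var x, _ => .var x
  | .mu x φ, p => .mu x (MuLf.sm φ p)
  | .nu x φ, p => .nu x (MuLf.sm φ p)

/-- Free variables of a μLf formula. -/
def MuLf.fv : MuLf A X P → Set X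
  | .bot => ∅
  | .top => ∅
  | .neg φ => MuLf.fv φ
  | .or φ ψ => MuLf.fv φ ∪ MuLf.fv ψ
  | .and φ ψ => MuLf.fv φ ∪ MuLf.fv ψ
  | .dia _ _ φ => MuLf.fv φ
  | .box _ _ φ => MuLf.fv φ
  | .var x => {x}
  | .mu x φ => MuLf.fv φ \ {x}
  | .nu x φ => MuLf.fv φ \ {x}

/-- A μLf formula is closed if it has no free variables. -/
def MuLf.closed (φ : MuLf A X P) : Prop := MuLf.fv φ = ∅

/-- Negation-free μLf formulas. -/
def MuLf.negFree : MuLf A X P → Prop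
  | .bot => True
  | .top => True
  | .neg _ => False
  | .or φ ψ => MuLf.negFree φ ∧ MuLf.negFree ψ
  | .and φ ψ => MuLf.negFree φ ∧ MuLf.negFree ψ
  | .dia _ _ φ => MuLf.negFree φ
  | .box _ _ φ => MuLf.negFree φ
  | .var _ => True
  | .mu _ φ => MuLf.negFree φ
  | .nu _ φ => MuLf.negFree φ

/-- Diamond-free μLf formulas (no ⟨a|χ⟩ / ⟪a|χ⟫). -/
def MuLf.diaFree : MuLf A X P → Prop
  | .bot => True
  | .top => True
  | .neg φ => MuLf.diaFree φ
  | .or φ ψ => MuLf.diaFree φ ∧ MuLf.diaFree ψ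
  | .and φ ψ => MuLf.diaFree φ ∧ MuLf.diaFree ψ
  | .dia _ _ _ => False
  | .box _ _ φ => MuLf.diaFree φ
  | .var _ => True
  | .mu _ φ => MuLf.diaFree φ
  | .nu _ φ => MuLf.diaFree φ

mutual
/-- All free occurrences of `x` are under an even number of negations. -/
def MuLf.posIn (x : X) : MuLf A X P → Prop
  | .bot => True
  | .top => True
  | .neg φ => MuLf.negOcc x φ
  | .or φ ψ => MuLf.posIn x φ ∧ MuLf.posIn x ψ
  | .and φ ψ => MuLf.posIn x φ ∧ MuLf.posIn x ψ
  | .dia _ _ φ => MuLf.posIn x φ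
  | .box _ _ φ => MuLf.posIn x φ
  | .var _ => True
  | .mu y φ => y = x ∨ MuLf.posIn x φ
  | .nu y φ => y = x ∨ MuLf.posIn x φ

/-- All free occurrences of `x` are under an odd number of negations. -/
def MuLf.negOcc (x : X) : MuLf A X P → Prop
  | .bot => True
  | .top => True
  | .neg φ => MuLf.posIn x φ
  | .or φ ψ => MuLf.negOcc x φ ∧ MuLf.negOcc x ψ
  | .and φ ψ => MuLf.negOcc x φ ∧ MuLf.negOcc x ψ
  | .dia _ _ φ => MuLf.negOcc x φ
  | .box _ _ φ => MuLf.negOcc x φ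
  | .var y => y ≠ x
  | .mu y φ => y = x ∨ MuLf.negOcc x φ
  | .nu y φ => y = x ∨ MuLf.negOcc x φ
end

/-- Well-formedness: fixpoint-bound variables occur positively. -/
def MuLf.wf : MuLf A X P → Prop
  | .bot => True
  | .top => True
  | .neg φ => MuLf.wf φ
  | .or φ ψ => MuLf.wf φ ∧ MuLf.wf ψ
  | .and φ ψ => MuLf.wf φ ∧ MuLf.wf ψ
  | .dia _ _ φ => MuLf.wf φ
  | .box _ _ φ => MuLf.wf φ
  | .var _ => True
  | .mu x φ => MuLf.posIn x φ ∧ MuLf.wf φ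
  | .nu x φ => MuLf.posIn x φ ∧ MuLf.wf φ

/-- Substitution φ[¬X/X] of ¬X for the free occurrences of X. -/
def MuLf.substNegVar [DecidableEq X] (x : X) : MuLf A X P → MuLf A X P
  | .bot => .bot
  | .top => .top
  | .neg φ => .neg (MuLf.substNegVar x φ)
  | .or φ ψ => .or (MuLf.substNegVar x φ) (MuLf.substNegVar x ψ)
  | .and φ ψ => .and (MuLf.substNegVar x φ) (MuLf.substNegVar x ψ)
  | .dia a χ φ => .dia a χ (MuLf.substNegVar x φ)
  | .box a χ φ => .box a χ (MuLf.substNegVar x φ)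
  | .var y => if y = x then .neg (.var y) else .var y
  | .mu y φ => if y = x then .mu y φ else .mu y (MuLf.substNegVar x φ)
  | .nu y φ => if y = x then .nu y φ else .nu y (MuLf.substNegVar x φ)

/-- Projection from state-family sets to state-product sets. -/
def fp {S P : Type} (W : Set (S × Set P)) : Set (S × P) :=
  {sp | ∃ Pf : Set P, (sp.1, Pf) ∈ W ∧ sp.2 ∈ Pf}

/-!
Induction on a negation-free formula shows `fp (⟦φ⟧' ζ) ⊆ ⟦φ⟧ η` whenever `fp (ζ x) ⊆ η x` for
every variable `x`. In the modal cases a family `Q` at `s` hands the subfamily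
`Q ∩ χ ∩ θ(s,a,t)` to the successor `t`, and that subfamily still contains every product of `Q`
that takes the step. For the fixpoints, `fp` is the lower adjoint of
`V ↦ {(s,Q) | {s} × Q ⊆ V}`: the upper adjoint turns a prefixpoint of the product semantics into
one of the family semantics (for `μ`), and `fp` maps postfixpoints to postfixpoints (for `ν`).
-/

theorem _root_.GaloisConnection.l_slfp_subset {α β : Type} {l : Set α → Set β} {u : Set β → Set α}
    (gc : GaloisConnection l u) {f : Set α → Set α} {g : Set β → Set β}
    (h : ∀ W V, l W ⊆ V → l (f W) ⊆ g V) : l (slfp f) ⊆ slfp g :=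
  Set.subset_sInter fun V hV =>
    gc.l_le <| Set.sInter_subset_of_mem <| gc.le_u <| (h _ V (gc.l_u_le V)).trans hV

theorem _root_.GaloisConnection.l_sgfp_subset {α β : Type} {l : Set α → Set β} {u : Set β → Set α}
    (gc : GaloisConnection l u) {f : Set α → Set α} {g : Set β → Set β}
    (h : ∀ W V, l W ⊆ V → l (f W) ⊆ g V) : l (sgfp f) ⊆ sgfp g :=
  gc.l_le <| Set.sUnion_subset fun W hW =>
    gc.le_u <| Set.subset_sUnion_of_mem <| (gc.monotone_l hW).trans (h W (l W) subset_rfl)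

def familiesWithin {S P : Type} (V : Set (S × P)) : Set (S × Set P) :=
  {sQ | ∀ q ∈ sQ.2, (sQ.1, q) ∈ V}

theorem gc_fp_familiesWithin {S P : Type} : GaloisConnection (@fp S P) familiesWithin :=
  fun _ _ => ⟨fun h sQ hsQ _ hq => h ⟨sQ.2, hsQ, hq⟩, fun h _ ⟨_, hW, hq⟩ => h hW _ hq⟩

@[simp]
theorem fp_empty {S P : Type} : fp (∅ : Set (S × Set P)) = ∅ :=
  gc_fp_familiesWithin.l_bot

theorem fp_update_subset [DecidableEq X] {ζ : X → Set (S × Set P)} {η : X → Set (S × P)}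
    (h : ∀ y, fp (ζ y) ⊆ η y) (x : X) {W : Set (S × Set P)} {V : Set (S × P)}
    (hWV : fp W ⊆ V) (y : X) : fp (Function.update ζ x W y) ⊆ Function.update η x V y := by
  rcases eq_or_ne y x with rfl | hy
  · simpa only [Function.update_self] using hWV
  · simpa only [Function.update_of_ne hy] using h y

theorem fp_fsem_subset_sem [DecidableEq X] (F : FTS S A P) {φ : MuLf A X P} (hφ : φ.negFree)
    {ζ : X → Set (S × Set P)} {η : X → Set (S × P)} (h : ∀ x, fp (ζ x) ⊆ η x) :
    fp (MuLf.fsem F φ ζ) ⊆ MuLf.sem F φ η := by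
  induction φ generalizing ζ η with
  | bot => simp [MuLf.fsem]
  | top => simp [MuLf.sem]
  | neg => exact hφ.elim
  | or φ ψ ihφ ihψ =>
    rintro sp ⟨Q, hQ | hQ, hp⟩
    · exact Or.inl (ihφ hφ.1 h ⟨Q, hQ, hp⟩)
    · exact Or.inr (ihψ hφ.2 h ⟨Q, hQ, hp⟩)
  | and φ ψ ihφ ihψ =>
    rintro sp ⟨Q, ⟨hQφ, hQψ⟩, hp⟩
    exact ⟨ihφ hφ.1 h ⟨Q, hQφ, hp⟩, ihψ hφ.2 h ⟨Q, hQψ, hp⟩⟩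
  | dia a χ φ ih =>
    rintro ⟨s, p⟩ ⟨Q, ⟨hQχ, t, hQθ, ht⟩, hp⟩
    exact ⟨hQχ hp, t, hQθ hp, ih hφ h ⟨_, ht, ⟨hp, hQχ hp⟩, hQθ hp⟩⟩
  | box a χ φ ih =>
    rintro ⟨s, p⟩ ⟨Q, hQ, hp⟩ hpχ t hpθ
    exact ih hφ h ⟨_, hQ ⟨p, hp, hpχ⟩ t ⟨p, ⟨hp, hpχ⟩, hpθ⟩, ⟨hp, hpχ⟩, hpθ⟩
  | var x => exact h x
  | mu x φ ih =>
    exact gc_fp_familiesWithin.l_slfp_subset fun _ _ hWV => ih hφ (fp_update_subset h x hWV)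
  | nu x φ ih =>
    exact gc_fp_familiesWithin.l_sgfp_subset fun _ _ hWV => ih hφ (fp_update_subset h x hWV)

/-- P ⊨'_F φ' implies p ⊨_F fm(φ') for every p ∈ P, for closed
negation-free φ' (fm is the identity on our shared syntax). -/
theorem stmt7 {S A X P : Type} [DecidableEq X] (F : FTS S A P)
    (phi : MuLf A X P) (hclosed : MuLf.closed phi) (hnf : MuLf.negFree phi)
    (Pf : Set P) :
    (F.init, Pf) ∈ MuLf.fsem F phi (fun _ => (∅ : Set (S × Set P))) →
      ∀ p ∈ Pf, (F.init, p) ∈ MuLf.sem F phi (fun _ => (∅ : Set (S × P))) :=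
  fun hPf _ hp =>
    fp_fsem_subset_sem F hnf (fun _ => fp_empty.subset) ⟨Pf, hPf, hp⟩

end SPLmu
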